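/- Let 1 ≤ n ≤ r. For every i with n+1 ≤ i ≤ r, one has P_n·w̃_n·P_n ∩ Ω_{w̃_i} = ∅. Consequently, for every i with n+1 ≤ i ≤ r, every f ∈ C_c^∞(Ω_{w̃_i},ω), every m ≥ 1 and every g ∈ P_n·w̃_n·P_n, B_m(g,f) = 0. -/

import Mathlib

open Matrix MeasureTheory
open scoped BigOperators Classical

noncomputable section

/-- Square matrices of size `2r+1` with entries in `E`; elements of the ambient space of
`U_{2r+1}`. -/
abbrev Mat (E : Type) [Field E] (r : ℕ) : Type := Matrix (Fin (2*r+1)) (Fin (2*r+1)) E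

section Defs

variable {E : Type} [Field E]

/-- The matrix `J_k` with `1`'s on the antidiagonal and `0`'s elsewhere. -/
def Jmat (E : Type) [Field E] (k : ℕ) : Matrix (Fin k) (Fin k) E :=
  fun i j => if (i : ℕ) + (j : ℕ) + 1 = k then 1 else 0

/-- Entrywise application of the Galois conjugation `σ`. -/
def mconj (σ : E ≃+* E) {k : ℕ} (M : Matrix (Fin k) (Fin k) E) : Matrix (Fin k) (Fin k) E :=
  fun i j => σ (M i j)

/-- Membership in the quasi-split unitary group `U_k = {g ∈ GL_k(E) : ᵗḡ J_k g = J_k}`. -/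
def inU (σ : E ≃+* E) {k : ℕ} (g : Matrix (Fin k) (Fin k) E) : Prop :=
  (mconj σ g)ᵀ * Jmat E k * g = Jmat E k ∧ IsUnit g

/-- The unitary group `G = U_{2r+1}` as a subset of the matrix space. -/
def Uset (σ : E ≃+* E) (r : ℕ) : Set (Mat E r) := {g | inU σ g}

/-- The position `i` (0-based) inside `Fin (2r+1)`, for `i : Fin r`. -/
def pL {r : ℕ} (i : Fin r) : Fin (2*r+1) := ⟨(i : ℕ), by have := i.isLt; omega⟩

/-- The position `i+1` (0-based) inside `Fin (2r+1)`, for `i : Fin r`. -/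
def pR {r : ℕ} (i : Fin r) : Fin (2*r+1) := ⟨(i : ℕ) + 1, by have := i.isLt; omega⟩

/-- The upper-triangular maximal unipotent subgroup `N` of `U_{2r+1}`. -/
def inN (σ : E ≃+* E) (r : ℕ) (u : Mat E r) : Prop :=
  inU σ u ∧ (∀ i : Fin (2*r+1), u i i = 1) ∧
    ∀ i j : Fin (2*r+1), (j : ℕ) < (i : ℕ) → u i j = 0

def NSet (σ : E ≃+* E) (r : ℕ) : Set (Mat E r) := {u | inN σ r u}

/-- The diagonal maximal torus `A` of `U_{2r+1}`. -/
def inA (σ : E ≃+* E) (r : ℕ) (t : Mat E r) : Prop :=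
  inU σ t ∧ ∀ i j : Fin (2*r+1), i ≠ j → t i j = 0

/-- The upper-triangular Borel subgroup `B = AN` of `U_{2r+1}`. -/
def inB (σ : E ≃+* E) (r : ℕ) (b : Mat E r) : Prop :=
  inU σ b ∧ ∀ i j : Fin (2*r+1), (j : ℕ) < (i : ℕ) → b i j = 0

/-- The generic character `ψ_N(u) = ψ(u_{1,2} + ⋯ + u_{r,r+1})` of `N`. -/
def psiN (ψ : AddChar E ℂ) (r : ℕ) (u : Mat E r) : ℂ :=
  ψ (∑ i : Fin r, u (pL i) (pR i))

/-- The fractional ideal `𝔭_E^m = ϖ^m 𝔬_E` as a subset of `E`. -/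
def Pm (O : Subring E) (ϖ : E) (m : ℕ) : Set E := {x | ∃ y ∈ O, x = ϖ ^ m * y}

/-- The congruence subgroup `K_m^G = (I + Mat(𝔭_E^m)) ∩ G`. -/
def inK (σ : E ≃+* E) (O : Subring E) (ϖ : E) (r m : ℕ) (k : Mat E r) : Prop :=
  inU σ k ∧ ∀ i j : Fin (2*r+1), k i j - (1 : Mat E r) i j ∈ Pm O ϖ m

/-- The torus element
`e_m = diag(ϖ^{-2rm}, …, ϖ^{-2m}, 1, σ(ϖ)^{2m}, …, σ(ϖ)^{2rm})`. -/
def eMat (σ : E ≃+* E) (ϖ : E) (r m : ℕ) : Mat E r :=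
  Matrix.diagonal fun i : Fin (2*r+1) =>
    if (i : ℕ) ≤ r then (ϖ ^ (2*(r - (i : ℕ))*m))⁻¹ else (σ ϖ) ^ (2*((i : ℕ) - r)*m)

/-- The compact open subgroup `H_m = e_m K_m^G e_m⁻¹`. -/
def inH (σ : E ≃+* E) (O : Subring E) (ϖ : E) (r m : ℕ) (h : Mat E r) : Prop :=
  ∃ k, inK σ O ϖ r m k ∧ h = eMat σ ϖ r m * k * (eMat σ ϖ r m)⁻¹

/-- The character `τ_m(k) = ψ(ϖ^{-2m}(k_{1,2} + ⋯ + k_{r,r+1}))` of `K_m^G`. -/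
def taum (ψ : AddChar E ℂ) (ϖ : E) (r m : ℕ) (k : Mat E r) : ℂ :=
  ψ ((ϖ ^ (2*m))⁻¹ * ∑ i : Fin r, k (pL i) (pR i))

/-- The character `ψ_m(h) = τ_m(e_m⁻¹ h e_m)` of `H_m`. -/
def psim (σ : E ≃+* E) (ψ : AddChar E ℂ) (ϖ : E) (r m : ℕ) (h : Mat E r) : ℂ :=
  taum ψ ϖ r m ((eMat σ ϖ r m)⁻¹ * h * eMat σ ϖ r m)

/-- The subgroup `N_m = N ∩ H_m`. -/
def NmSet (σ : E ≃+* E) (O : Subring E) (ϖ : E) (r m : ℕ) : Set (Mat E r) :=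
  {u | inN σ r u ∧ inH σ O ϖ r m u}

/-- `ω` is a (multiplicative) character of the norm-one subgroup
`E¹ = {z : z σ(z) = 1}`. -/
def IsCharE1 (σ : E ≃+* E) (ω : E → ℂ) : Prop :=
  ω 1 = 1 ∧ ∀ z w : E, z * σ z = 1 → w * σ w = 1 → ω (z * w) = ω z * ω w

/-- The space `C^∞(G, ψ_N, ω)`: functions with `W(zug) = ω(z)ψ_N(u)W(g)` which are invariant
under right translation by some open compact subgroup (equivalently, by `K_C^G` for some `C ≥ 1`,
the subgroups `K_m^G` being a fundamental system). -/
def CinfWhittaker (σ : E ≃+* E) (O : Subring E) (ϖ : E) (ψ : AddChar E ℂ) (ω : E → ℂ)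
    (r : ℕ) (W : Mat E r → ℂ) : Prop :=
  (∀ z : E, z * σ z = 1 → ∀ u, inN σ r u → ∀ g : Mat E r,
      W (z • (u * g)) = ω z * (psiN ψ r u * W g)) ∧
  ∃ C : ℕ, 1 ≤ C ∧ ∀ (g k : Mat E r), inK σ O ϖ r C k → W (g * k) = W g

/-- `C` is an exponent of smoothness for `W`: `W` is invariant under right translation
by `K_C^G`. -/
def IsSmoothnessBound (σ : E ≃+* E) (O : Subring E) (ϖ : E) (r : ℕ)
    (W : Mat E r → ℂ) (C : ℕ) : Prop :=
  1 ≤ C ∧ ∀ (g k : Mat E r), inK σ O ϖ r C k → W (g * k) = W g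

end Defs

section TopMeas

instance matMeas (E : Type) [Field E] [MeasurableSpace E] (r : ℕ) :
    MeasurableSpace (Mat E r) :=
  show MeasurableSpace (Fin (2*r+1) → Fin (2*r+1) → E) from inferInstance

variable {E : Type} [Field E]

/-- The data of a `p`-adic field together with a quadratic-extension conjugation:
`σ` is a nontrivial involution, `O` is the (compact open) valuation ring of `E`, and `ϖ` is a
uniformizer (the nonunits of `O` are exactly `ϖ O`). -/
def LocalFieldData [TopologicalSpace E] (σ : E ≃+* E) (O : Subring E) (ϖ : E) : Prop :=
  Function.Involutive σ ∧ σ ≠ RingEquiv.refl E ∧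
  (∀ x : E, x ∈ O ∨ (x ≠ 0 ∧ x⁻¹ ∈ O)) ∧
  ϖ ∈ O ∧ ϖ ≠ 0 ∧
  (∀ x ∈ O, (∀ y ∈ O, x * y ≠ 1) → x ∈ Pm O ϖ 1) ∧
  IsOpen (O : Set E) ∧ IsCompact (O : Set E)

/-- `ψ` is a nontrivial unramified additive character: trivial on `𝔬_E` and nontrivial
on `ϖ⁻¹𝔬_E`. -/
def UnramifiedChar (O : Subring E) (ϖ : E) (ψ : AddChar E ℂ) : Prop :=
  (∀ x ∈ O, ψ x = 1) ∧ ∃ x ∈ O, ψ (ϖ⁻¹ * x) ≠ 1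

variable [MeasurableSpace E]

/-- `μ` is a (bi-invariant) Haar measure on the unipotent group `N`: it is concentrated on `N`,
invariant under left and right translation by elements of `N`, and gives the compact open
subgroups `N_m` finite positive volume. -/
def IsHaarOnN (σ : E ≃+* E) (O : Subring E) (ϖ : E) (r : ℕ) (μ : Measure (Mat E r)) : Prop :=
  μ {u | ¬ inN σ r u} = 0 ∧
  (∀ u, inN σ r u → ∀ s : Set (Mat E r), μ ((fun x => u * x) ⁻¹' s) = μ s) ∧
  (∀ u, inN σ r u → ∀ s : Set (Mat E r), μ ((fun x => x * u) ⁻¹' s) = μ s) ∧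
  ∀ m : ℕ, 1 ≤ m → μ (NmSet σ O ϖ r m) ≠ 0 ∧ μ (NmSet σ O ϖ r m) ≠ ⊤

/-- The Howe vector
`W_m(g) = vol(N_m)⁻¹ ∫_{N_m} ψ_m(u)⁻¹ W(gu) du`. -/
def howe (σ : E ≃+* E) (O : Subring E) (ϖ : E) (ψ : AddChar E ℂ) (r : ℕ)
    (μ : Measure (Mat E r)) (m : ℕ) (W : Mat E r → ℂ) (g : Mat E r) : ℂ :=
  (((μ (NmSet σ O ϖ r m)).toReal : ℂ))⁻¹ *
    ∫ u in NmSet σ O ϖ r m, (psim σ ψ ϖ r m u)⁻¹ * W (g * u) ∂μ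

/-- `W^f(g) = ∫_N ψ_N(u)⁻¹ f(ug) du`. -/
def WfInt (σ : E ≃+* E) (ψ : AddChar E ℂ) (r : ℕ) (μ : Measure (Mat E r))
    (f : Mat E r → ℂ) (g : Mat E r) : ℂ :=
  ∫ u in NSet σ r, (psiN ψ r u)⁻¹ * f (u * g) ∂μ

/-- The partial Bessel function
`B_m(g, f) = vol(N_m)⁻¹ ∫_N ∫_{N_m} ψ_N(u)⁻¹ ψ_m(u')⁻¹ f(u g u') du du'`. -/
def Bm (σ : E ≃+* E) (O : Subring E) (ϖ : E) (ψ : AddChar E ℂ) (r : ℕ)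
    (μ : Measure (Mat E r)) (m : ℕ) (f : Mat E r → ℂ) (g : Mat E r) : ℂ :=
  (((μ (NmSet σ O ϖ r m)).toReal : ℂ))⁻¹ *
    ∫ u in NSet σ r, (∫ u' in NmSet σ O ϖ r m,
      (psiN ψ r u)⁻¹ * ((psim σ ψ ϖ r m u')⁻¹ * f (u * g * u')) ∂μ) ∂μ

/-- The space `C_c^∞(Ω, ω)` of locally constant compactly supported functions supported in `Ω`
transforming by `ω` under the center `E¹`. -/
def CcInf [TopologicalSpace E] (σ : E ≃+* E) (ω : E → ℂ) (r : ℕ)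
    (Ω : Set (Mat E r)) (f : Mat E r → ℂ) : Prop :=
  IsLocallyConstant f ∧ HasCompactSupport f ∧ (∀ g, f g ≠ 0 → g ∈ Ω) ∧
  ∀ z : E, z * σ z = 1 → ∀ g : Mat E r, f (z • g) = ω z * f g

end TopMeas

section Weyl

variable {E : Type} [Field E]

/-- A matrix is monomial if it has exactly one nonzero entry in each row and column. -/
def IsMonomial {k : ℕ} (g : Matrix (Fin k) (Fin k) E) : Prop :=
  (∀ i : Fin k, ∃! j, g i j ≠ 0) ∧ (∀ j : Fin k, ∃! i, g i j ≠ 0)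

/-- Representatives of Weyl group elements: monomial matrices in `G`. -/
def inWeyl (σ : E ≃+* E) (r : ℕ) (w : Mat E r) : Prop := inU σ w ∧ IsMonomial w

/-- The Bruhat cell `C(w) = BwB`. -/
def BruhatCell (σ : E ≃+* E) (r : ℕ) (w : Mat E r) : Set (Mat E r) :=
  {g | ∃ b₁ b₂, inB σ r b₁ ∧ inB σ r b₂ ∧ g = b₁ * w * b₂}

variable [TopologicalSpace E]

/-- Bruhat order: `w₁ ≤ w₂` iff `C(w₁)` is contained in the closure of `C(w₂)`. -/
def bruhatLE (σ : E ≃+* E) (r : ℕ) (w₁ w₂ : Mat E r) : Prop :=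
  BruhatCell σ r w₁ ⊆ closure (BruhatCell σ r w₂)

/-- Strict Bruhat order on Weyl group elements (distinct cells). -/
def bruhatLT (σ : E ≃+* E) (r : ℕ) (w₁ w₂ : Mat E r) : Prop :=
  bruhatLE σ r w₁ w₂ ∧ BruhatCell σ r w₁ ≠ BruhatCell σ r w₂

/-- `Ω_w = ⋃_{w' ≥ w} C(w')`. -/
def OmegaSet (σ : E ≃+* E) (r : ℕ) (w : Mat E r) : Set (Mat E r) :=
  {g | ∃ w', inWeyl σ r w' ∧ bruhatLE σ r w w' ∧ g ∈ BruhatCell σ r w'}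

/-- `w` supports a Bessel function: for every simple root `α_i` (with root positions
`(i-1, i)`), if `wα_i` is positive then it is again simple.  For a monomial matrix this is
expressed via the positions of the nonzero entries in the relevant columns. -/
def inBG (σ : E ≃+* E) (r : ℕ) (w : Mat E r) : Prop :=
  inWeyl σ r w ∧ ∀ (i : Fin r) (k l : Fin (2*r+1)),
    w k (pL i) ≠ 0 → w l (pR i) ≠ 0 → (k : ℕ) < (l : ℕ) → (l : ℕ) = (k : ℕ) + 1

/-- `θ_w ⊆ Δ`: the set of simple roots `α_{i+1}` (0-based `i`) with `wα_{i+1} > 0`. -/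
def thetaSet (r : ℕ) (w : Mat E r) : Set (Fin r) :=
  {i | ∃ k l : Fin (2*r+1), w k (pL i) ≠ 0 ∧ w l (pR i) ≠ 0 ∧ (k : ℕ) < (l : ℕ)}

/-- `A_w = {a ∈ A : α(a) = 1 for all α ∈ θ_w}`. -/
def inAw (σ : E ≃+* E) (r : ℕ) (w : Mat E r) (a : Mat E r) : Prop :=
  inA σ r a ∧ ∀ i ∈ thetaSet r w, a (pL i) (pL i) = a (pR i) (pR i)

/-- A Bessel chain of length `m` from `w'` up to `w` inside `B(G)`. -/
def besselChain (σ : E ≃+* E) (r : ℕ) (w w' : Mat E r) (m : ℕ) : Prop :=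
  ∃ c : ℕ → Mat E r, c 0 = w' ∧ c m = w ∧ (∀ j, j ≤ m → inBG σ r (c j)) ∧
    ∀ j, j < m → bruhatLT σ r (c j) (c (j+1))

/-- `d_B(w, w') = d`: the Bessel distance between `w` and `w'` equals `d`. -/
def besselDistEq (σ : E ≃+* E) (r : ℕ) (w w' : Mat E r) (d : ℕ) : Prop :=
  besselChain σ r w w' d ∧ ∀ m, besselChain σ r w w' m → m ≤ d

end Weyl

section Elements

variable {E : Type} [Field E]

/-- `X* = J_r ᵗX̄⁻¹ J_r`. -/
def starMat (σ : E ≃+* E) {k : ℕ} (X : Matrix (Fin k) (Fin k) E) : Matrix (Fin k) (Fin k) E :=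
  Jmat E k * ((mconj σ X)ᵀ)⁻¹ * Jmat E k

/-- `X^∧ = diag(X, 1, X*)` for `X ∈ GL_r(E)`. -/
def hat (σ : E ≃+* E) {r : ℕ} (X : Matrix (Fin r) (Fin r) E) : Mat E r :=
  fun i j =>
    if h : (i : ℕ) < r ∧ (j : ℕ) < r then X ⟨(i : ℕ), h.1⟩ ⟨(j : ℕ), h.2⟩
    else if h2 : r < (i : ℕ) ∧ r < (j : ℕ) then
      starMat σ X ⟨(i : ℕ) - (r+1), by have := i.isLt; omega⟩
        ⟨(j : ℕ) - (r+1), by have := j.isLt; omega⟩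
    else if (i : ℕ) = r ∧ (j : ℕ) = r then 1 else 0

/-- The Weyl element `w̃_n = [[0,0,I_n],[0,I_{2(r-n)+1},0],[I_n,0,0]]`. -/
def wtilde (E : Type) [Field E] (r n : ℕ) : Mat E r := fun i j =>
  if (i : ℕ) < n then (if (j : ℕ) = (i : ℕ) + (2*r+1-n) then 1 else 0)
  else if (i : ℕ) < 2*r+1-n then (if j = i then 1 else 0)
  else (if (j : ℕ) + (2*r+1-n) = (i : ℕ) then 1 else 0)

/-- `t_n(a) = diag(a, I_{r-n})^∧` for `a ∈ GL_n(E)`. -/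
def tnMat (σ : E ≃+* E) (r n : ℕ) (a : Matrix (Fin n) (Fin n) E) : Mat E r :=
  hat σ (fun i j : Fin r =>
    if h : (i : ℕ) < n ∧ (j : ℕ) < n then a ⟨(i : ℕ), h.1⟩ ⟨(j : ℕ), h.2⟩
    else if i = j then 1 else 0)

/-- The standard parabolic subgroup `P_n` of `G` with Levi
`L_n = E¹·{diag(a, a_{n+1}, …, a_r)^∧}`: block upper triangular matrices in `G` for the
partition `(n, 1, …, 1)` of the first `r` indices. -/
def inPn (σ : E ≃+* E) (r n : ℕ) (g : Mat E r) : Prop :=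
  inU σ g ∧ ∀ i j : Fin (2*r+1), (j : ℕ) < (i : ℕ) → ¬((i : ℕ) < n ∧ (j : ℕ) < n) → g i j = 0

/-- The subset `P_n w̃_n P_n` of `G`. -/
def PnwPn (σ : E ≃+* E) (r n : ℕ) : Set (Mat E r) :=
  {g | ∃ p₁ p₂, inPn σ r n p₁ ∧ inPn σ r n p₂ ∧ g = p₁ * wtilde E r n * p₂}

/-- `S_n^- = {[[I_n, x, y], [0, I_{2r-2n+1}, x'], [0, 0, I_n]] ∈ G}`. -/
def inSnMinus (σ : E ≃+* E) (r n : ℕ) (g : Mat E r) : Prop :=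
  inU σ g ∧ (∀ i : Fin (2*r+1), g i i = 1) ∧
  (∀ i j : Fin (2*r+1), (j : ℕ) < (i : ℕ) → g i j = 0) ∧
  (∀ i j : Fin (2*r+1), (i : ℕ) < (j : ℕ) →
    ((j : ℕ) < n ∨ (n ≤ (i : ℕ) ∧ (j : ℕ) < 2*r+1-n) ∨ 2*r+1-n ≤ (i : ℕ)) → g i j = 0)

/-- The block-diagonal matrix `diag(J_n, I_{r-n})` of size `r`. -/
def JIblock (E : Type) [Field E] (r n : ℕ) : Matrix (Fin r) (Fin r) E := fun i j =>
  if (i : ℕ) < n then (if (i : ℕ) + (j : ℕ) + 1 = n then 1 else 0)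
  else (if j = i then 1 else 0)

/-- The longest Weyl element `w_ℓ^{L_n}` of the Levi `L_n`: `diag(J_n, I_{r-n})^∧`. -/
def wlLn (σ : E ≃+* E) (r n : ℕ) : Mat E r := hat σ (JIblock E r n)

/-- `w_max = w_ℓ^{L_n} w̃_n`. -/
def wmax (σ : E ≃+* E) (r n : ℕ) : Mat E r := wlLn σ r n * wtilde E r n

/-- The matrix `diag(I_n, J_{2r-2n+1}, I_n)`. -/
def midJ (E : Type) [Field E] (r n : ℕ) : Mat E r := fun i j =>
  if (i : ℕ) < n ∨ 2*r+1-n ≤ (i : ℕ) then (if j = i then 1 else 0)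
  else (if (i : ℕ) + (j : ℕ) = 2*r then 1 else 0)

/-- `w_{1,r-1} = ([[0,1],[I_{r-1},0]])^∧`. -/
def w1r1 (σ : E ≃+* E) (r : ℕ) : Mat E r :=
  hat σ (fun i j : Fin r =>
    if (i : ℕ) = 0 then (if (j : ℕ) = r - 1 then 1 else 0)
    else (if (j : ℕ) + 1 = (i : ℕ) then 1 else 0))

/-- `j(g) = w_{1,r-1} g w_{1,r-1}⁻¹`. -/
def jconj (σ : E ≃+* E) (r : ℕ) (g : Mat E r) : Mat E r :=
  w1r1 σ r * g * (w1r1 σ r)⁻¹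

/-- `[[I_{r-1}, x], [0, 1]]` for a column vector `x`. -/
def colU (E : Type) [Field E] (r : ℕ) (x : Fin (r-1) → E) : Matrix (Fin r) (Fin r) E :=
  fun i j =>
    if i = j then 1
    else if h : (i : ℕ) < r - 1 ∧ (j : ℕ) = r - 1 then x ⟨(i : ℕ), h.1⟩ else 0

/-- `t_1(a) = diag(a, I_{r-1})^∧` for `a ∈ E^×`. -/
def t1Mat (σ : E ≃+* E) (r : ℕ) (a : E) : Mat E r :=
  hat σ (Matrix.diagonal fun i : Fin r => if (i : ℕ) = 0 then a else 1)

/-- Upper-triangular unipotent matrices (the subgroup `Z_n` of `GL_n(E)`). -/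
def UpperUni {n : ℕ} (z : Matrix (Fin n) (Fin n) E) : Prop :=
  (∀ i : Fin n, z i i = 1) ∧ ∀ i j : Fin n, (j : ℕ) < (i : ℕ) → z i j = 0

end Elements

section MoreElements

variable {E : Type} [Field E]

/-- The torus element `diag(a₁, …, a_r, 1, σ(a_r)⁻¹, …, σ(a₁)⁻¹)`. -/
def torusMat (σ : E ≃+* E) (r : ℕ) (a : Fin r → E) : Mat E r :=
  Matrix.diagonal fun i : Fin (2*r+1) =>
    if h : (i : ℕ) < r then a ⟨(i : ℕ), h⟩
    else if h2 : (i : ℕ) = r then 1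
    else (σ (a ⟨2*r - (i : ℕ), by have := i.isLt; omega⟩))⁻¹

/-- The matrix `diag(J_n, J_{2(r-n)+1}, J_n)`. -/
def blockJ3 (E : Type) [Field E] (r n : ℕ) : Mat E r := fun i j =>
  if (i : ℕ) < n ∧ (j : ℕ) < n then (if (i : ℕ) + (j : ℕ) + 1 = n then 1 else 0)
  else if n ≤ (i : ℕ) ∧ (i : ℕ) < 2*r+1-n ∧ n ≤ (j : ℕ) ∧ (j : ℕ) < 2*r+1-n then
    (if (i : ℕ) + (j : ℕ) = 2*r then 1 else 0)
  else if 2*r+1-n ≤ (i : ℕ) ∧ 2*r+1-n ≤ (j : ℕ) then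
    (if (i : ℕ) + (j : ℕ) + 1 = 4*r+2-n then 1 else 0)
  else 0

end MoreElements

section Stability

variable {E : Type} [Field E] [TopologicalSpace E]

/-- A subset of `G` stable under left and right multiplication by `N` and by `A`. -/
def NAStable (σ : E ≃+* E) (r : ℕ) (Ω : Set (Mat E r)) : Prop :=
  ∀ g ∈ Ω, (∀ u, inN σ r u → u * g ∈ Ω ∧ g * u ∈ Ω) ∧
    (∀ a, inA σ r a → a * g ∈ Ω ∧ g * a ∈ Ω)

end Stability

/-!
Let `Δᵢ(g)` be the minor of `g` on the last `i` rows and the first `i` columns. For `b₁, b₂` upper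
triangular, `Δᵢ(b₁ g b₂)` is `Δᵢ(g)` times two nonzero diagonal minors, so on a Bruhat cell `C(w)`
`Δᵢ` either vanishes identically or nowhere. For `p₁, p₂ ∈ P_n` with `n < i` the same factorisation
holds, and `Δᵢ(w̃_n) = 0` because the first of the last `i` rows of `w̃_n` lies in its middle
identity block; hence `Δᵢ = 0` on `P_n w̃_n P_n`. On the other hand `Δᵢ(w̃ᵢ) = 1`, and `Δᵢ` is
continuous with closed zero set (`E` is T₁, having an open proper subring), so `Δᵢ(w') ≠ 0`
whenever `w̃ᵢ ∈ closure C(w')`: `Δᵢ` does not vanish on `Ω_{w̃ᵢ}`. Finally `B_m(g, f)` integrates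
`f` over `N g N ⊆ P_n w̃_n P_n`, where `f` vanishes.
-/

section MatrixMinors

variable {R : Type*} [CommRing R]

theorem Matrix.submatrix_mul_of_forall_notMem_range {l m n ι κ ν : Type*} [Fintype m]
    [Fintype ν] (A : Matrix l m R) (B : Matrix m n R) (r : ι → l) (c : κ → n) {e : ν → m}
    (he : e.Injective) (h : ∀ x z y, y ∉ Set.range e → A (r x) y * B y (c z) = 0) :
    (A * B).submatrix r c = A.submatrix r e * B.submatrix e c := by
  ext x z
  exact (Fintype.sum_of_injective e he _ _ (h x z) fun _ => rfl).symm

theorem Matrix.IsUpperTriangular.det_submatrix_ne_zero {m n : Type*} [LinearOrder m]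
    [LinearOrder n] [Fintype m] [Fintype n] [IsDomain R] {M : Matrix m m R}
    (hM : M.IsUpperTriangular) (hdet : M.det ≠ 0) {e : n → m} (he : StrictMono e) :
    (M.submatrix e e).det ≠ 0 := by
  have hsub : (M.submatrix e e).IsUpperTriangular := fun x y hxy => hM (he hxy)
  rw [det_of_isUpperTriangular hM, Finset.prod_ne_zero_iff] at hdet
  rw [det_of_isUpperTriangular hsub, Finset.prod_ne_zero_iff]
  exact fun x _ => hdet (e x) (Finset.mem_univ _)

def bottomRows {k i : ℕ} (h : i ≤ k) (a : Fin i) : Fin k := ⟨k - i + a, by omega⟩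

theorem bottomRows_strictMono {k i : ℕ} (h : i ≤ k) : StrictMono (bottomRows h) :=
  fun a b hab => by simp only [bottomRows, Fin.mk_lt_mk]; omega

theorem lt_of_notMem_range_bottomRows {k i : ℕ} (h : i ≤ k) {y : Fin k}
    (hy : y ∉ Set.range (bottomRows h)) : (y : ℕ) < k - i := by
  by_contra hle
  exact hy ⟨⟨y - (k - i), by omega⟩, Fin.ext (by simp only [bottomRows]; omega)⟩

theorem le_of_notMem_range_castLE {k i : ℕ} (h : i ≤ k) {y : Fin k}
    (hy : y ∉ Set.range (Fin.castLE h)) : i ≤ (y : ℕ) := by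
  by_contra hlt
  exact hy ⟨⟨y, by omega⟩, rfl⟩

def cornerMinor {k i : ℕ} (h : i ≤ k) (M : Matrix (Fin k) (Fin k) R) : R :=
  (M.submatrix (bottomRows h) (Fin.castLE h)).det

theorem continuous_cornerMinor [TopologicalSpace R] [IsTopologicalRing R] {k i : ℕ}
    (h : i ≤ k) : Continuous (cornerMinor h : Matrix (Fin k) (Fin k) R → R) :=
  (continuous_id.matrix_submatrix _ _).matrix_det

theorem cornerMinor_mul_mul {k i : ℕ} (h : i ≤ k) (b₁ M b₂ : Matrix (Fin k) (Fin k) R)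
    (hb₁ : ∀ x y : Fin k, (y : ℕ) < k - i → k - i ≤ (x : ℕ) → b₁ x y = 0)
    (hb₂ : ∀ x y : Fin k, (y : ℕ) < i → i ≤ (x : ℕ) → b₂ x y = 0) :
    cornerMinor h (b₁ * M * b₂) = (b₁.submatrix (bottomRows h) (bottomRows h)).det *
      cornerMinor h M * (b₂.submatrix (Fin.castLE h) (Fin.castLE h)).det := by
  rw [cornerMinor, Matrix.mul_assoc,
    submatrix_mul_of_forall_notMem_range _ _ _ _ (bottomRows_strictMono h).injective,
    submatrix_mul_of_forall_notMem_range _ _ _ _ (Fin.castLE_injective h),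
    det_mul, det_mul, cornerMinor, mul_assoc]
  · intro x z y hy
    rw [hb₂ y _ z.isLt (le_of_notMem_range_castLE h hy), mul_zero]
  · intro x z y hy
    rw [hb₁ _ y (lt_of_notMem_range_bottomRows h hy) (by simp [bottomRows]), zero_mul]

end MatrixMinors

section Bruhat

variable {E : Type} [Field E] {σ : E ≃+* E} {r : ℕ}

theorem mconj_eq_map {k : ℕ} (M : Matrix (Fin k) (Fin k) E) : mconj σ M = M.map σ := rfl

theorem inU_one {k : ℕ} : inU σ (1 : Matrix (Fin k) (Fin k) E) := by
  refine ⟨?_, isUnit_one⟩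
  rw [mconj_eq_map, Matrix.map_one _ (map_zero σ) (map_one σ), transpose_one, Matrix.mul_one,
    Matrix.one_mul]

theorem inU.mul {k : ℕ} {A B : Matrix (Fin k) (Fin k) E} (hA : inU σ A) (hB : inU σ B) :
    inU σ (A * B) := by
  refine ⟨?_, hA.2.mul hB.2⟩
  rw [mconj_eq_map, Matrix.map_mul, transpose_mul]
  calc _ = (B.map σ)ᵀ * ((mconj σ A)ᵀ * Jmat E k * A) * B := by
          simp only [mconj_eq_map, Matrix.mul_assoc]
    _ = Jmat E k := by rw [hA.1, ← mconj_eq_map, hB.1]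

theorem inB_one : inB σ r 1 := ⟨inU_one, fun _ _ h => one_apply_ne (Fin.ne_of_gt h)⟩

theorem self_mem_bruhatCell (w : Mat E r) : w ∈ BruhatCell σ r w :=
  ⟨1, 1, inB_one, inB_one, by rw [Matrix.one_mul, Matrix.mul_one]⟩

theorem inB.isUpperTriangular {b : Mat E r} (hb : inB σ r b) : b.IsUpperTriangular :=
  fun x y hxy => hb.2 x y hxy

theorem inB.apply_eq_zero_of_lt_of_le {b : Mat E r} (hb : inB σ r b) {t : ℕ}
    {x y : Fin (2*r+1)} (hy : (y : ℕ) < t) (hx : t ≤ (x : ℕ)) : b x y = 0 :=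
  hb.2 x y (by omega)

theorem inB.det_submatrix_ne_zero {b : Mat E r} (hb : inB σ r b) {i : ℕ} {e : Fin i → Fin (2*r+1)}
    (he : StrictMono e) : (b.submatrix e e).det ≠ 0 :=
  hb.isUpperTriangular.det_submatrix_ne_zero ((isUnit_iff_isUnit_det b).mp hb.1.2).ne_zero he

theorem cornerMinor_eq_zero_iff_of_mem_bruhatCell {i : ℕ} (h : i ≤ 2*r+1) {g w : Mat E r}
    (hg : g ∈ BruhatCell σ r w) : cornerMinor h g = 0 ↔ cornerMinor h w = 0 := by
  obtain ⟨b₁, b₂, hb₁, hb₂, rfl⟩ := hg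
  rw [cornerMinor_mul_mul h _ _ _ (fun _ _ => hb₁.apply_eq_zero_of_lt_of_le)
    (fun _ _ => hb₂.apply_eq_zero_of_lt_of_le)]
  simp only [mul_eq_zero, hb₁.det_submatrix_ne_zero (bottomRows_strictMono h),
    hb₂.det_submatrix_ne_zero (Fin.strictMono_castLE h), false_or, or_false]

theorem closure_bruhatCell_subset [TopologicalSpace E] [IsTopologicalRing E]
    (h0 : IsClosed ({0} : Set E)) {i : ℕ} (h : i ≤ 2*r+1) {w : Mat E r}
    (hw : cornerMinor h w = 0) : closure (BruhatCell σ r w) ⊆ {g | cornerMinor h g = 0} :=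
  closure_minimal (fun _ hg => (cornerMinor_eq_zero_iff_of_mem_bruhatCell h hg).2 hw)
    (h0.preimage (continuous_cornerMinor h))

end Bruhat

section Parabolic

variable {E : Type} [Field E] {σ : E ≃+* E} {r n : ℕ}

theorem cornerMinor_wtilde_self {i : ℕ} (hi : i ≤ r) :
    cornerMinor (by omega : i ≤ 2*r+1) (wtilde E r i) = 1 := by
  have hk : i ≤ 2*r+1 := by omega
  have hcorner : (wtilde E r i).submatrix (bottomRows hk) (Fin.castLE hk) = 1 := by
    ext a c
    have := a.isLt
    have := c.isLt
    simp only [submatrix_apply, wtilde, bottomRows, Fin.val_castLE, one_apply, Fin.ext_iff]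
    grind
  rw [cornerMinor, hcorner, det_one]

theorem cornerMinor_wtilde_of_lt {i : ℕ} (hni : n < i) (hi : i ≤ r) :
    cornerMinor (by omega : i ≤ 2*r+1) (wtilde E r n) = 0 := by
  refine det_eq_zero_of_row_eq_zero ⟨0, by omega⟩ fun c => ?_
  have := c.isLt
  simp only [submatrix_apply, wtilde, bottomRows, Fin.val_castLE, Fin.ext_iff]
  grind

theorem inN.inPn {u : Mat E r} (hu : inN σ r u) : inPn σ r n u :=
  ⟨hu.1, fun i j hij _ => hu.2.2 i j hij⟩

theorem inPn.mul {p q : Mat E r} (hp : inPn σ r n p) (hq : inPn σ r n q) :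
    inPn σ r n (p * q) := by
  refine ⟨hp.1.mul hq.1, fun i j hji hblock => ?_⟩
  refine (mul_apply ..).trans (Finset.sum_eq_zero fun k _ => ?_)
  by_cases hki : (k : ℕ) < i
  · rw [hp.2 i k hki (by omega), zero_mul]
  · rw [hq.2 k j (by omega) (by omega), mul_zero]

theorem inPn.apply_eq_zero_of_lt_of_le {p : Mat E r} (hp : inPn σ r n p) {t : ℕ} (hnt : n ≤ t)
    {x y : Fin (2*r+1)} (hy : (y : ℕ) < t) (hx : t ≤ (x : ℕ)) : p x y = 0 :=
  hp.2 x y (by omega) (by omega)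

theorem mul_mul_mem_PnwPn {g u u' : Mat E r} (hg : g ∈ PnwPn σ r n) (hu : inN σ r u)
    (hu' : inN σ r u') : u * g * u' ∈ PnwPn σ r n := by
  obtain ⟨p₁, p₂, hp₁, hp₂, rfl⟩ := hg
  exact ⟨u * p₁, p₂ * u', hu.inPn.mul hp₁, hp₂.mul hu'.inPn, by simp only [Matrix.mul_assoc]⟩

theorem cornerMinor_eq_zero_of_mem_PnwPn {i : ℕ} (hni : n < i) (hi : i ≤ r) {g : Mat E r}
    (hg : g ∈ PnwPn σ r n) : cornerMinor (by omega : i ≤ 2*r+1) g = 0 := by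
  obtain ⟨p₁, p₂, hp₁, hp₂, rfl⟩ := hg
  rw [cornerMinor_mul_mul _ _ _ _
    (fun _ _ => hp₁.apply_eq_zero_of_lt_of_le (by omega))
    (fun _ _ => hp₂.apply_eq_zero_of_lt_of_le hni.le),
    cornerMinor_wtilde_of_lt hni hi, mul_zero, zero_mul]

theorem cornerMinor_ne_zero_of_mem_omegaSet [TopologicalSpace E] [IsTopologicalRing E]
    (h0 : IsClosed ({0} : Set E)) {i : ℕ} (hi : i ≤ r) {g : Mat E r}
    (hg : g ∈ OmegaSet σ r (wtilde E r i)) : cornerMinor (by omega : i ≤ 2*r+1) g ≠ 0 := by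
  obtain ⟨w, -, hle, hgw⟩ := hg
  rw [Ne, cornerMinor_eq_zero_iff_of_mem_bruhatCell _ hgw]
  intro hw
  have h : cornerMinor _ (wtilde E r i) = 0 :=
    closure_bruhatCell_subset h0 _ hw (hle (self_mem_bruhatCell _))
  rw [cornerMinor_wtilde_self hi] at h
  exact one_ne_zero h

theorem PnwPn_inter_omegaSet_wtilde_eq_empty [TopologicalSpace E] [IsTopologicalRing E]
    (h0 : IsClosed ({0} : Set E)) {i : ℕ} (hni : n < i) (hi : i ≤ r) :
    PnwPn σ r n ∩ OmegaSet σ r (wtilde E r i) = ∅ :=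
  Set.eq_empty_iff_forall_notMem.2 fun _ ⟨hP, hΩ⟩ =>
    cornerMinor_ne_zero_of_mem_omegaSet h0 hi hΩ (cornerMinor_eq_zero_of_mem_PnwPn hni hi hP)

end Parabolic

theorem isClosed_singleton_zero_of_isOpen {K : Type*} [Field K] [TopologicalSpace K]
    [IsTopologicalRing K] {U : Set K} (hU : IsOpen U) (h0 : (0 : K) ∈ U) {x : K} (hx : x ∉ U) :
    IsClosed ({0} : Set K) := by
  rw [← closure_subset_iff_isClosed]
  intro y hy
  by_contra hy0
  have hx0 : x ∈ closure ({0} : Set K) := by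
    simpa [mul_assoc, inv_mul_cancel₀ hy0] using
      map_mem_closure (continuous_const_mul (x * y⁻¹)) hy (by simp)
  rw [← specializes_iff_mem_closure, specializes_comm] at hx0
  exact hx (hx0.mem_open hU h0)

theorem Bm_eq_zero_of_forall_inN {E : Type} [Field E] [MeasurableSpace E] {σ : E ≃+* E}
    {O : Subring E} {ϖ : E} {ψ : AddChar E ℂ} {r : ℕ} {μ : Measure (Mat E r)} {m : ℕ}
    {f : Mat E r → ℂ} {g : Mat E r}
    (hf : ∀ u u', inN σ r u → inN σ r u' → f (u * g * u') = 0) : Bm σ O ϖ ψ r μ m f g = 0 := by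
  rw [Bm, setIntegral_eq_zero_of_forall_eq_zero fun u hu =>
    setIntegral_eq_zero_of_forall_eq_zero fun u' hu' => ?_, mul_zero]
  rw [hf u u' hu hu'.1, mul_zero, mul_zero]

theorem PnwPn_disjoint_Omega_general
    {E : Type} [Field E] [TopologicalSpace E] [IsTopologicalRing E] [MeasurableSpace E]
    (r : ℕ)
    (σ : E ≃+* E) (O : Subring E) (ϖ : E) (hEF : LocalFieldData σ O ϖ)
    (ψ : AddChar E ℂ) (hψ : UnramifiedChar O ϖ ψ)
    (ω : E → ℂ)
    (μ : Measure (Mat E r))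
    (n : ℕ) :
    (∀ i : ℕ, n + 1 ≤ i → i ≤ r →
      PnwPn σ r n ∩ OmegaSet σ r (wtilde E r i) = ∅) ∧
    (∀ i : ℕ, n + 1 ≤ i → i ≤ r →
      ∀ f : Mat E r → ℂ, CcInf σ ω r (OmegaSet σ r (wtilde E r i)) f →
        ∀ m : ℕ, 1 ≤ m → ∀ g ∈ PnwPn σ r n, Bm σ O ϖ ψ r μ m f g = 0) := by
  obtain ⟨hψO, x, -, hψx⟩ := hψ
  have h0 : IsClosed ({0} : Set E) :=
    isClosed_singleton_zero_of_isOpen hEF.2.2.2.2.2.2.1 O.zero_mem (x := ϖ⁻¹ * x)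
      fun h => hψx (hψO _ h)
  have hdisj : ∀ i, n + 1 ≤ i → i ≤ r → PnwPn σ r n ∩ OmegaSet σ r (wtilde E r i) = ∅ :=
    fun i hni hi => PnwPn_inter_omegaSet_wtilde_eq_empty h0 hni hi
  refine ⟨hdisj, fun i hni hi f hf m _ g hg => Bm_eq_zero_of_forall_inN fun u u' hu hu' => ?_⟩
  by_contra hfg
  exact Set.eq_empty_iff_forall_notMem.1 (hdisj i hni hi) _
    ⟨mul_mul_mem_PnwPn hg hu hu', hf.2.2.1 _ hfg⟩

/-- For `1 ≤ n ≤ r` and `n+1 ≤ i ≤ r`, `P_n w̃_n P_n ∩ Ω_{w̃_i} = ∅`;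
consequently `B_m(g, f) = 0` for every `f ∈ C_c^∞(Ω_{w̃_i}, ω)`, every `m ≥ 1` and every
`g ∈ P_n w̃_n P_n`. -/
theorem PnwPn_disjoint_Omega
    {E : Type} [Field E] [TopologicalSpace E] [IsTopologicalRing E] [MeasurableSpace E]
    (r : ℕ) (hr : 1 ≤ r)
    (σ : E ≃+* E) (O : Subring E) (ϖ : E) (hEF : LocalFieldData σ O ϖ)
    (ψ : AddChar E ℂ) (hψ : UnramifiedChar O ϖ ψ)
    (ω : E → ℂ) (hω : IsCharE1 σ ω)
    (μ : Measure (Mat E r)) (hμ : IsHaarOnN σ O ϖ r μ)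
    (n : ℕ) (hn1 : 1 ≤ n) (hnr : n ≤ r) :
    (∀ i : ℕ, n + 1 ≤ i → i ≤ r →
      PnwPn σ r n ∩ OmegaSet σ r (wtilde E r i) = ∅) ∧
    (∀ i : ℕ, n + 1 ≤ i → i ≤ r →
      ∀ f : Mat E r → ℂ, CcInf σ ω r (OmegaSet σ r (wtilde E r i)) f →
        ∀ m : ℕ, 1 ≤ m → ∀ g ∈ PnwPn σ r n, Bm σ O ϖ ψ r μ m f g = 0) :=
  PnwPn_disjoint_Omega_general r σ O ϖ hEF ψ hψ ω μ n
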